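/- For a prime implication filter P of an MV-algebra, ℓ(P) equals the intersection of all minimal prime implication filters contained in P. -/

import Mathlib

/-- An MV-algebra `(α, ⊕, ¬, 0)` with the standard axioms. -/
class MV (α : Type*) extends Add α, Neg α, Zero α where
  add_assoc : ∀ a b c : α, a + (b + c) = (a + b) + c
  add_comm : ∀ a b : α, a + b = b + a
  add_zero : ∀ a : α, a + 0 = a
  neg_neg : ∀ a : α, - -a = a
  add_neg_zero : ∀ a : α, a + -(0 : α) = -(0 : α)
  luk : ∀ a b : α, -(-a + b) + b = -(-b + a) + a

namespace MV

variable {α : Type*} [MV α]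

/-- The top element `1 = ¬0`. -/
def one (α : Type*) [MV α] : α := -(0 : α)

/-- Implication `x → y = ¬x ⊕ y`. -/
def imp (a b : α) : α := -a + b

/-- Strong conjunction `x ⊗ y = ¬(¬x ⊕ ¬y)`. -/
def otimes (a b : α) : α := -(-a + -b)

/-- Join `x ∨ y = (x → y) → y`. -/
def sup (a b : α) : α := imp (imp a b) b

/-- Meet `x ∧ y = ¬(¬x ∨ ¬y)`. -/
def inf (a b : α) : α := -(sup (-a) (-b))

/-- Order: `x ≤ y` iff `x → y = 1`. -/
def le (a b : α) : Prop := imp a b = one α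

/-- Strict order. -/
def lt (a b : α) : Prop := le a b ∧ a ≠ b

/-- `n`-fold `⊗`-power. -/
def pow (a : α) : ℕ → α
  | 0 => one α
  | n + 1 => otimes a (pow a n)

/-- An implication filter: a lattice filter closed under `⊗`. -/
def IsImpFilter (F : Set α) : Prop :=
  one α ∈ F ∧ (∀ x ∈ F, ∀ y : α, le x y → y ∈ F) ∧
    (∀ x ∈ F, ∀ y ∈ F, inf x y ∈ F) ∧ (∀ x ∈ F, ∀ y ∈ F, otimes x y ∈ F)

/-- A prime implication filter: proper and `x ∨ y ∈ F → x ∈ F ∨ y ∈ F`. -/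
def IsPrime (F : Set α) : Prop :=
  IsImpFilter F ∧ F ≠ Set.univ ∧ ∀ x y : α, sup x y ∈ F → x ∈ F ∨ y ∈ F

/-- A minimal prime implication filter. -/
def IsMinimalPrime (F : Set α) : Prop :=
  IsPrime F ∧ ∀ G : Set α, IsPrime G → G ⊆ F → G = F

/-- A maximal proper implication filter. -/
def IsMaximal (F : Set α) : Prop :=
  IsImpFilter F ∧ F ≠ Set.univ ∧
    ∀ G : Set α, IsImpFilter G → G ≠ Set.univ → F ⊆ G → G = F

/-- A counit: `u < 1` joining to `1` with some `v < 1`. -/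
def IsCounit (u : α) : Prop :=
  lt u (one α) ∧ ∃ v : α, lt v (one α) ∧ sup u v = one α

/-- The implication filter generated by a set. -/
def gen (S : Set α) : Set α := ⋂₀ {F : Set α | IsImpFilter F ∧ S ⊆ F}

/-- The Conrad filter: the implication filter generated by all counits. -/
def conrad (α : Type*) [MV α] : Set α := gen {u : α | IsCounit u}

/-- The localizing filter `ℓ(P)`, generated by `{x → p : p ∈ P, x ∉ P}`. -/
def locFilter (P : Set α) : Set α :=
  gen {z : α | ∃ x : α, x ∉ P ∧ ∃ p ∈ P, z = imp x p}

end MV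

open MV

/-!
Every prime `m ⊆ P` contains `ℓ(P)`: by prelinearity `(x → p) ∨ (p → x) = 1 ∈ m`, and
`p → x ∈ m ⊆ P` is impossible for `x ∉ P`, since `p ⊗ (p → x) ≤ x`.

Conversely, if `z ∉ ℓ(P)`, the prime filter theorem yields a prime `Q ⊇ ℓ(P)` with `z ∉ Q`
(a filter maximal among those avoiding `z` is prime because
`(x ∨ y)^(2^n) ≤ x^(2^n) ∨ y^(2^n)`). Either `Q ⊆ P`, or some `q ∈ Q \ P` gives
`p ≥ q ⊗ (q → p) ∈ Q` for every `p ∈ P`, i.e. `P ⊆ Q`. In both cases a minimal prime below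
the smaller of `P` and `Q`, which exists by Zorn, omits `z`.
-/

namespace MV

variable {α : Type*} [MV α]

local notation "𝟙" => one _

theorem zero_add (a : α) : 0 + a = a := by rw [add_comm, add_zero]

theorem add_one (a : α) : a + 𝟙 = 𝟙 := add_neg_zero a

theorem one_add (a : α) : 𝟙 + a = 𝟙 := by rw [add_comm, add_one]

theorem neg_one : -(𝟙 : α) = 0 := neg_neg 0

instance : Std.Associative (fun a b : α => a + b) := ⟨fun a b c => (add_assoc a b c).symm⟩

instance : Std.Commutative (fun a b : α => a + b) := ⟨add_comm⟩

theorem neg_add_self (a : α) : -a + a = 𝟙 := by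
  simpa only [add_one, neg_one, zero_add] using (luk a 𝟙).symm

theorem le_iff_exists_add {a b : α} : le a b ↔ ∃ c, b = a + c := by
  constructor
  · intro h
    have hl := luk a b
    rw [le, imp] at h
    rw [h, neg_one, zero_add, add_comm] at hl
    exact ⟨_, hl⟩
  · rintro ⟨c, rfl⟩
    show -a + (a + c) = 𝟙
    rw [add_assoc, neg_add_self, one_add]

theorem le_refl (a : α) : le a a := neg_add_self a

theorem le_top (a : α) : le a 𝟙 := by rw [le, imp, add_one]

theorem le_add_right (a c : α) : le a (a + c) := le_iff_exists_add.2 ⟨c, rfl⟩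

theorem le_trans {a b c : α} (h₁ : le a b) (h₂ : le b c) : le a c := by
  obtain ⟨u, rfl⟩ := le_iff_exists_add.1 h₁
  obtain ⟨v, rfl⟩ := le_iff_exists_add.1 h₂
  rw [← add_assoc]
  exact le_add_right _ _

theorem le_antisymm {a b : α} (h₁ : le a b) (h₂ : le b a) : a = b := by
  have hl := luk a b
  rw [le, imp] at h₁ h₂
  rwa [h₁, h₂, neg_one, zero_add, zero_add, eq_comm] at hl

theorem add_le_add_right {a b : α} (h : le a b) (c : α) : le (a + c) (b + c) := by
  obtain ⟨u, rfl⟩ := le_iff_exists_add.1 h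
  exact le_iff_exists_add.2 ⟨u, by ac_rfl⟩

theorem add_le_add_left {a b : α} (h : le a b) (c : α) : le (c + a) (c + b) := by
  rw [add_comm c a, add_comm c b]
  exact add_le_add_right h c

theorem neg_le_neg {a b : α} (h : le a b) : le (-b) (-a) := by
  rw [le, imp, neg_neg, add_comm]
  exact h

theorem sup_comm (a b : α) : sup a b = sup b a := luk a b

theorem le_sup_right (a b : α) : le b (sup a b) := by
  rw [sup, imp, add_comm]
  exact le_add_right _ _

theorem le_sup_left (a b : α) : le a (sup a b) := sup_comm b a ▸ le_sup_right b a

theorem sup_eq_right {b c : α} (h : le b c) : sup b c = c := by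
  rw [le, imp] at h
  rw [sup, imp, imp, h, neg_one, zero_add]

theorem sup_le {a b c : α} (h₁ : le a c) (h₂ : le b c) : le (sup a b) c := by
  have h : le (sup a b) (sup c b) :=
    add_le_add_right (neg_le_neg (add_le_add_right (neg_le_neg h₁) b)) b
  rwa [sup_comm c b, sup_eq_right h₂] at h

theorem inf_le_right (a b : α) : le (inf a b) b := by
  simpa only [inf, neg_neg] using neg_le_neg (le_sup_right (-a) (-b))

theorem le_inf {a b c : α} (h₁ : le c a) (h₂ : le c b) : le c (inf a b) := by
  simpa only [inf, neg_neg] using neg_le_neg (sup_le (neg_le_neg h₁) (neg_le_neg h₂))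

theorem inf_comm (a b : α) : inf a b = inf b a := by rw [inf, inf, sup_comm]

theorem otimes_comm (a b : α) : otimes a b = otimes b a := by rw [otimes, otimes, add_comm]

theorem otimes_assoc (a b c : α) : otimes a (otimes b c) = otimes (otimes a b) c := by
  simp only [otimes, neg_neg, add_assoc]

instance : Std.Associative (fun a b : α => otimes a b) :=
  ⟨fun a b c => (otimes_assoc a b c).symm⟩

instance : Std.Commutative (fun a b : α => otimes a b) := ⟨otimes_comm⟩

theorem otimes_one (a : α) : otimes a 𝟙 = a := by rw [otimes, neg_one, add_zero, neg_neg]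

theorem one_otimes (a : α) : otimes 𝟙 a = a := by rw [otimes_comm, otimes_one]

theorem otimes_le_left (a b : α) : le (otimes a b) a := by
  simpa only [otimes, neg_neg] using neg_le_neg (le_add_right (-a) (-b))

theorem otimes_le_right (a b : α) : le (otimes a b) b := otimes_comm b a ▸ otimes_le_left b a

theorem otimes_le_inf (a b : α) : le (otimes a b) (inf a b) :=
  le_inf (otimes_le_left a b) (otimes_le_right a b)

theorem otimes_le_otimes_left {b c : α} (h : le b c) (a : α) :
    le (otimes a b) (otimes a c) := by
  simpa only [otimes] using neg_le_neg (add_le_add_left (neg_le_neg h) (-a))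

theorem otimes_le_otimes {a b c d : α} (h₁ : le a b) (h₂ : le c d) :
    le (otimes a c) (otimes b d) := by
  refine le_trans (otimes_le_otimes_left h₂ a) ?_
  rw [otimes_comm a, otimes_comm b]
  exact otimes_le_otimes_left h₁ d

theorem otimes_imp_le (a b : α) : le (otimes a (imp a b)) b := by
  show -(-(-a + -(-a + b))) + b = 𝟙
  rw [neg_neg, ← add_assoc, luk a b, add_assoc, add_comm (-a), ← add_assoc, neg_add_self,
    add_one]

theorem neg_add_otimes (a c : α) : -a + otimes a c = sup c (-a) := by
  rw [sup, imp, imp, otimes, add_comm (-c) (-a), add_comm]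

theorem le_imp_iff_otimes_le {a b c : α} : le c (imp a b) ↔ le (otimes a c) b := by
  refine ⟨fun h => le_trans (otimes_le_otimes_left h a) (otimes_imp_le a b), fun h => ?_⟩
  have hc : le c (-a + otimes a c) := neg_add_otimes a c ▸ le_sup_left c (-a)
  exact le_trans hc (add_le_add_left h (-a))

theorem otimes_imp_eq_inf (a b : α) : otimes a (imp a b) = inf a b := by
  have h := luk (-b) (-a)
  simp only [neg_neg] at h
  simp only [otimes, imp, inf, sup, neg_neg]
  rw [← h, add_comm b (-a), add_comm (-(-a + b)) (-a)]

theorem add_otimes_neg (a b : α) : otimes (a + b) (-b) = inf a (-b) := by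
  have h := otimes_imp_eq_inf (-b) a
  rw [imp, neg_neg, inf_comm] at h
  rw [← h, otimes_comm, add_comm b a]

theorem eq_add_neg_imp {u v : α} (h : le u v) : v = u + -(-v + u) := by
  have hl := luk u v
  rw [le, imp] at h
  rw [h, neg_one, zero_add] at hl
  exact hl.trans (add_comm _ _)

/-- `p ⊕ q = p ⊕ (q ∧ ¬p)` and `q = (p ⊗ q) ⊕ (q ∧ ¬p)`, so `p ⊕ q` already absorbs `p ⊗ q`. -/
theorem add_add_otimes (p q : α) : p + q + otimes p q = p + q := by
  have hpq : p + q = p + inf q (-p) := by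
    have e : -(-(p + q) + p) = inf q (-p) := by
      have h := add_otimes_neg q p
      rw [otimes, neg_neg, add_comm q p] at h
      exact h
    rw [← e]
    exact eq_add_neg_imp (le_add_right p q)
  have hq : q = otimes p q + inf q (-p) := by
    have e : -(-q + otimes p q) = inf q (-p) := by
      rw [← otimes_imp_eq_inf, otimes, otimes, imp, add_comm (-p) (-q)]
    rw [← e]
    exact eq_add_neg_imp (otimes_le_right p q)
  calc p + q + otimes p q = p + inf q (-p) + otimes p q := by rw [← hpq]
    _ = p + (otimes p q + inf q (-p)) := by ac_rfl
    _ = p + q := by rw [← hq]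

theorem imp_imp_imp (x y : α) : imp (imp x y) (imp y x) = imp y x := by
  have h := add_add_otimes x (-y)
  simp only [otimes, neg_neg] at h
  calc imp (imp x y) (imp y x) = x + -y + -(-x + y) := by
        simp only [imp]; ac_rfl
    _ = imp y x := by rw [h, imp, add_comm]

theorem sup_imp_imp (x y : α) : sup (imp x y) (imp y x) = 𝟙 := by
  rw [sup, imp_imp_imp]
  exact le_refl _

theorem otimes_sup (a b c : α) : otimes a (sup b c) = sup (otimes a b) (otimes a c) := by
  refine le_antisymm ?_ (sup_le (otimes_le_otimes_left (le_sup_left b c) a)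
    (otimes_le_otimes_left (le_sup_right b c) a))
  rw [← le_imp_iff_otimes_le]
  exact sup_le (le_imp_iff_otimes_le.2 (le_sup_left _ _))
    (le_imp_iff_otimes_le.2 (le_sup_right _ _))

/-- Splitting `x ⊗ y` along `(x → y) ∨ (y → x) = 1`. -/
theorem otimes_le_sup_otimes_self (x y : α) :
    le (otimes x y) (sup (otimes x x) (otimes y y)) := by
  rw [← otimes_one (otimes x y), ← sup_imp_imp x y, otimes_sup]
  refine sup_le (le_trans ?_ (le_sup_right _ _)) (le_trans ?_ (le_sup_left _ _))
  · rw [otimes_comm x y, ← otimes_assoc, otimes_imp_eq_inf]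
    exact otimes_le_otimes_left (inf_le_right x y) y
  · rw [← otimes_assoc, otimes_imp_eq_inf]
    exact otimes_le_otimes_left (inf_le_right y x) x

theorem otimes_sup_self_le (x y : α) :
    le (otimes (sup x y) (sup x y)) (sup (otimes x x) (otimes y y)) := by
  rw [otimes_sup, otimes_comm, otimes_sup, otimes_comm (sup x y), otimes_sup]
  refine sup_le (sup_le (le_sup_left _ _) (otimes_le_sup_otimes_self x y)) (sup_le ?_ ?_)
  · rw [sup_comm]
    exact otimes_le_sup_otimes_self y x
  · exact le_sup_right _ _

theorem pow_add (a : α) (m n : ℕ) : pow a (m + n) = otimes (pow a m) (pow a n) := by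
  induction m with
  | zero => rw [Nat.zero_add, pow, one_otimes]
  | succ k ih => rw [Nat.add_right_comm, pow, ih, pow, otimes_assoc]

theorem pow_one (a : α) : pow a 1 = a := otimes_one a

theorem pow_anti {m n : ℕ} (h : m ≤ n) (a : α) : le (pow a n) (pow a m) := by
  obtain ⟨k, rfl⟩ := Nat.exists_eq_add_of_le h
  rw [pow_add]
  exact otimes_le_left _ _

theorem pow_sup_two_pow_le (x y : α) (k : ℕ) :
    le (pow (sup x y) (2 ^ k)) (sup (pow x (2 ^ k)) (pow y (2 ^ k))) := by
  induction k with
  | zero => simpa only [Nat.pow_zero, pow_one] using le_refl (sup x y)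
  | succ k ih =>
    rw [Nat.pow_succ, Nat.mul_two, pow_add, pow_add, pow_add]
    exact le_trans (otimes_le_otimes ih ih) (otimes_sup_self_le _ _)

namespace IsImpFilter

variable {F : Set α}

theorem of_otimes_mem (h₁ : 𝟙 ∈ F) (hle : ∀ x ∈ F, ∀ y, le x y → y ∈ F)
    (hot : ∀ x ∈ F, ∀ y ∈ F, otimes x y ∈ F) : IsImpFilter F :=
  ⟨h₁, hle, fun x hx y hy => hle _ (hot x hx y hy) _ (otimes_le_inf x y), hot⟩

theorem one_mem (hF : IsImpFilter F) : 𝟙 ∈ F := hF.1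

theorem mem_of_le (hF : IsImpFilter F) {x y : α} (hx : x ∈ F) (h : le x y) : y ∈ F :=
  hF.2.1 x hx y h

theorem otimes_mem (hF : IsImpFilter F) {x y : α} (hx : x ∈ F) (hy : y ∈ F) :
    otimes x y ∈ F :=
  hF.2.2.2 x hx y hy

theorem pow_mem (hF : IsImpFilter F) {a : α} (ha : a ∈ F) (n : ℕ) : pow a n ∈ F := by
  induction n with
  | zero => exact hF.one_mem
  | succ k ih => exact hF.otimes_mem ha ih

theorem sInter {S : Set (Set α)} (hS : ∀ F ∈ S, IsImpFilter F) : IsImpFilter (⋂₀ S) :=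
  of_otimes_mem (Set.mem_sInter.2 fun F hF => (hS F hF).one_mem)
    (fun _ hx _ h => Set.mem_sInter.2 fun F hF => (hS F hF).mem_of_le (Set.mem_sInter.1 hx F hF) h)
    (fun _ hx _ hy => Set.mem_sInter.2 fun F hF =>
      (hS F hF).otimes_mem (Set.mem_sInter.1 hx F hF) (Set.mem_sInter.1 hy F hF))

theorem sUnion_of_isChain {S : Set (Set α)} (hc : IsChain (· ⊆ ·) S) (hne : S.Nonempty)
    (hS : ∀ F ∈ S, IsImpFilter F) : IsImpFilter (⋃₀ S) := by
  obtain ⟨F₀, hF₀⟩ := hne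
  refine of_otimes_mem ⟨F₀, hF₀, (hS F₀ hF₀).one_mem⟩ ?_ ?_
  · rintro x ⟨F, hF, hx⟩ y h
    exact ⟨F, hF, (hS F hF).mem_of_le hx h⟩
  · rintro x ⟨F, hF, hx⟩ y ⟨G, hG, hy⟩
    rcases hc.total hF hG with hFG | hGF
    · exact ⟨G, hG, (hS G hG).otimes_mem (hFG hx) hy⟩
    · exact ⟨F, hF, (hS F hF).otimes_mem hx (hGF hy)⟩

end IsImpFilter

theorem IsPrime.mem_or_mem {Q : Set α} (hQ : IsPrime Q) {x y : α} (h : sup x y ∈ Q) :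
    x ∈ Q ∨ y ∈ Q :=
  hQ.2.2 x y h

theorem subset_gen (S : Set α) : S ⊆ gen S :=
  fun _ hx => Set.mem_sInter.2 fun _ hF => hF.2 hx

theorem gen_subset {S F : Set α} (hF : IsImpFilter F) (h : S ⊆ F) : gen S ⊆ F :=
  Set.sInter_subset_of_mem ⟨hF, h⟩

theorem isImpFilter_gen (S : Set α) : IsImpFilter (gen S) :=
  IsImpFilter.sInter fun _ hF => hF.1

theorem mem_gen_insert_iff {Q : Set α} (hQ : IsImpFilter Q) {x z : α} :
    z ∈ gen (insert x Q) ↔ ∃ q ∈ Q, ∃ n, le (otimes q (pow x n)) z := by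
  set G := {w : α | ∃ q ∈ Q, ∃ n, le (otimes q (pow x n)) w}
  refine ⟨fun hz => gen_subset (S := insert x Q) (F := G) ?_ ?_ hz, ?_⟩
  · refine IsImpFilter.of_otimes_mem ⟨𝟙, hQ.one_mem, 0, le_top _⟩
      (fun w ⟨q, hq, n, h⟩ y hy => ⟨q, hq, n, le_trans h hy⟩) ?_
    rintro w ⟨q₁, hq₁, n₁, h₁⟩ y ⟨q₂, hq₂, n₂, h₂⟩
    have e : otimes (otimes q₁ q₂) (pow x (n₁ + n₂))
        = otimes (otimes q₁ (pow x n₁)) (otimes q₂ (pow x n₂)) := by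
      rw [pow_add]; ac_rfl
    exact ⟨_, hQ.otimes_mem hq₁ hq₂, n₁ + n₂, e ▸ otimes_le_otimes h₁ h₂⟩
  · rintro w (rfl | hw)
    · exact ⟨𝟙, hQ.one_mem, 1, by rw [one_otimes, pow_one]; exact le_refl w⟩
    · exact ⟨w, hw, 0, by rw [pow, otimes_one]; exact le_refl w⟩
  · rintro ⟨q, hq, n, h⟩
    have hG := isImpFilter_gen (insert x Q)
    exact hG.mem_of_le (hG.otimes_mem (subset_gen _ (Or.inr hq))
      (hG.pow_mem (subset_gen _ (Or.inl rfl)) n)) h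

theorem mem_or_mem_of_maximal {Q : Set α} {z : α} (hQ : IsImpFilter Q) (hzQ : z ∉ Q)
    (hmax : ∀ G : Set α, IsImpFilter G → Q ⊆ G → z ∉ G → G = Q) {x y : α}
    (hxy : sup x y ∈ Q) : x ∈ Q ∨ y ∈ Q := by
  -- by maximality, the filter generated by `Q` and any `w ∉ Q` contains `z`
  have hgen : ∀ w, w ∉ Q → ∃ q ∈ Q, ∃ n, le (otimes q (pow w n)) z := by
    intro w hw
    refine (mem_gen_insert_iff hQ).1 (not_not.1 fun hz => hw ?_)
    rw [← hmax _ (isImpFilter_gen _) ((Set.subset_insert w Q).trans (subset_gen _)) hz]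
    exact subset_gen _ (Set.mem_insert w Q)
  by_contra! h
  obtain ⟨q₁, hq₁, n₁, h₁⟩ := hgen x h.1
  obtain ⟨q₂, hq₂, n₂, h₂⟩ := hgen y h.2
  set N := n₁ + n₂
  have hN : N ≤ 2 ^ N := Nat.lt_two_pow_self.le
  have hle : le (otimes (otimes q₁ q₂) (pow (sup x y) (2 ^ N))) z := by
    refine le_trans (otimes_le_otimes_left (pow_sup_two_pow_le x y N) _) ?_
    rw [otimes_sup]
    exact sup_le
      (le_trans (otimes_le_otimes (otimes_le_left _ _) (pow_anti (by omega) x)) h₁)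
      (le_trans (otimes_le_otimes (otimes_le_right _ _) (pow_anti (by omega) y)) h₂)
  exact hzQ (hQ.mem_of_le (hQ.otimes_mem (hQ.otimes_mem hq₁ hq₂) (hQ.pow_mem hxy _)) hle)

theorem exists_isPrime_superset_not_mem {F : Set α} (hF : IsImpFilter F) {z : α} (hz : z ∉ F) :
    ∃ Q : Set α, IsPrime Q ∧ F ⊆ Q ∧ z ∉ Q := by
  obtain ⟨Q, -, hmax⟩ :=
    zorn_subset_nonempty {G : Set α | IsImpFilter G ∧ F ⊆ G ∧ z ∉ G}
    (fun c hcS hc hne => ⟨⋃₀ c,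
      ⟨IsImpFilter.sUnion_of_isChain hc hne fun G hG => (hcS hG).1,
        (hcS hne.some_mem).2.1.trans (Set.subset_sUnion_of_mem hne.some_mem),
        by rintro ⟨G, hG, hzG⟩; exact (hcS hG).2.2 hzG⟩,
      fun _ => Set.subset_sUnion_of_mem⟩) F ⟨hF, subset_rfl, hz⟩
  obtain ⟨hQ, hFQ, hzQ⟩ := hmax.prop
  refine ⟨Q, ⟨hQ, fun h => hzQ (h ▸ Set.mem_univ z), fun x y => ?_⟩, hFQ, hzQ⟩
  exact mem_or_mem_of_maximal hQ hzQ fun G hG hQG hzG =>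
    (hmax.2 ⟨hG, hFQ.trans hQG, hzG⟩ hQG).antisymm hQG

theorem IsPrime.sInter_of_isChain {c : Set (Set α)} (hc : IsChain (· ⊆ ·) c) (hne : c.Nonempty)
    (hS : ∀ R ∈ c, IsPrime R) : IsPrime (⋂₀ c) := by
  obtain ⟨R₀, hR₀⟩ := hne
  refine ⟨IsImpFilter.sInter fun R hR => (hS R hR).1, fun h => (hS R₀ hR₀).2.1 ?_,
    fun x y hxy => ?_⟩
  · exact Set.eq_univ_of_univ_subset (h ▸ Set.sInter_subset_of_mem hR₀)
  by_contra! h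
  simp only [Set.mem_sInter, not_forall] at h
  obtain ⟨⟨R₁, hR₁, hx⟩, ⟨R₂, hR₂, hy⟩⟩ := h
  rcases hc.total hR₁ hR₂ with h₁₂ | h₂₁
  · exact ((hS R₁ hR₁).mem_or_mem (Set.mem_sInter.1 hxy R₁ hR₁)).elim hx fun h => hy (h₁₂ h)
  · exact ((hS R₂ hR₂).mem_or_mem (Set.mem_sInter.1 hxy R₂ hR₂)).elim (fun h => hx (h₂₁ h)) hy

theorem IsPrime.exists_isMinimalPrime_subset {Q : Set α} (hQ : IsPrime Q) :
    ∃ m : Set α, IsMinimalPrime m ∧ m ⊆ Q := by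
  obtain ⟨m, -, hmin⟩ := zorn_superset_nonempty {R : Set α | IsPrime R ∧ R ⊆ Q}
    (fun c hcS hc hne => ⟨⋂₀ c,
      ⟨IsPrime.sInter_of_isChain hc hne fun R hR => (hcS hR).1,
        (Set.sInter_subset_of_mem hne.some_mem).trans (hcS hne.some_mem).2⟩,
      fun _ => Set.sInter_subset_of_mem⟩) Q ⟨hQ, subset_rfl⟩
  exact ⟨m, ⟨hmin.prop.1, fun G hG hGm =>
    hGm.antisymm (hmin.2 ⟨hG, hGm.trans hmin.prop.2⟩ hGm)⟩, hmin.prop.2⟩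

theorem isImpFilter_locFilter (P : Set α) : IsImpFilter (locFilter P) := isImpFilter_gen _

theorem locFilter_subset {P m : Set α} (hP : IsImpFilter P) (hm : IsPrime m) (hmP : m ⊆ P) :
    locFilter P ⊆ m := by
  refine gen_subset hm.1 ?_
  rintro _ ⟨x, hx, p, hp, rfl⟩
  refine (hm.mem_or_mem (sup_imp_imp x p ▸ hm.1.one_mem)).resolve_right fun h => hx ?_
  exact hP.mem_of_le (hP.otimes_mem hp (hmP h)) (otimes_imp_le p x)

theorem subset_of_locFilter_subset {P Q : Set α} (hQ : IsImpFilter Q) (h : locFilter P ⊆ Q)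
    (hQP : ¬Q ⊆ P) : P ⊆ Q := by
  obtain ⟨q, hq, hqP⟩ := Set.not_subset.1 hQP
  exact fun p hp => hQ.mem_of_le (hQ.otimes_mem hq (h (subset_gen _ ⟨q, hqP, p, hp, rfl⟩)))
    (otimes_imp_le q p)

end MV

/-- `ℓ(P)` is the intersection of the minimal primes contained in `P`. -/
theorem locFilter_eq_sInter_minimal {α : Type*} [MV α] (P : Set α) (hP : IsPrime P) :
    locFilter P = ⋂₀ {m : Set α | IsMinimalPrime m ∧ m ⊆ P} := by
  refine subset_antisymm (Set.subset_sInter fun m ⟨hm, hmP⟩ => locFilter_subset hP.1 hm.1 hmP)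
    fun z hz => ?_
  by_contra hzP
  obtain ⟨Q, hQ, hlQ, hzQ⟩ := exists_isPrime_superset_not_mem (isImpFilter_locFilter P) hzP
  obtain ⟨m, hm, hmQ, hmP⟩ : ∃ m, MV.IsMinimalPrime m ∧ m ⊆ Q ∧ m ⊆ P := by
    by_cases hQP : Q ⊆ P
    · obtain ⟨m, hm, hmQ⟩ := hQ.exists_isMinimalPrime_subset
      exact ⟨m, hm, hmQ, hmQ.trans hQP⟩
    · obtain ⟨m, hm, hmP⟩ := hP.exists_isMinimalPrime_subset
      exact ⟨m, hm, hmP.trans (subset_of_locFilter_subset hQ.1 hlQ hQP), hmP⟩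
  exact hzQ (hmQ (Set.mem_sInter.1 hz m ⟨hm, hmP⟩))
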